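/- arXiv:1505.00152 — 4 statements merged into one kernel-verified Lean document; each statement's English description precedes it below -/
import Mathlib

section
/- Let E be a Banach space, and let (T_n) be a sequence of bounded linear operators on E such that for every x ∈ E the sequence (T_n x) is Cauchy. Then for any bounded set {x_n : n ≥ 1} ⊂ E, the Hausdorff measure of noncompactness satisfies β({T_n x_n : n ≥ 1}) ≤ (limsup_{n→∞} ‖T_n‖) · β({x_n : n ≥ 1}). -/
open Bornology Filter Set

/-- Hausdorff measure of noncompactness. -/
noncomputable def hmnc {E : Type*} [NormedAddCommGroup E] (Ω : Set E) : ℝ :=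
  sInf {r : ℝ | 0 < r ∧ ∃ S : Finset E, Ω ⊆ ⋃ x ∈ S, Metric.ball x r}

open Metric Topology

/-!
Cover `{x_n}` by finitely many balls `B(c, s)` with `s` slightly above `β({x_n})`. Eventually
`‖T_n‖ ≤ M` for any `M > limsup ‖T_n‖`, and `T_n c` is eventually `ε`-close to some fixed `T_{N_c} c`,
so for large `n` the point `T_n x_n` lies in `B(T_{N_c} c, M s + ε)`; the finitely many remaining
points become centres themselves. Banach–Steinhaus makes `(‖T_n‖)` bounded, so `M` can be taken
arbitrarily close to the `limsup`.
-/

section Hmnc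

variable {E : Type*} [NormedAddCommGroup E]

lemma hmnc_nonneg (Ω : Set E) : 0 ≤ hmnc Ω :=
  Real.sInf_nonneg fun _ hr => hr.1.le

lemma hmnc_le_of_subset_iUnion_ball {Ω : Set E} {r : ℝ} (hr : 0 < r) {S : Finset E}
    (hS : Ω ⊆ ⋃ c ∈ S, ball c r) : hmnc Ω ≤ r :=
  csInf_le ⟨0, fun _ hr => hr.1.le⟩ ⟨hr, S, hS⟩

lemma exists_subset_iUnion_ball_of_hmnc_lt {Ω : Set E} (hΩ : IsBounded Ω) {s : ℝ}
    (hs : hmnc Ω < s) : ∃ S : Finset E, Ω ⊆ ⋃ c ∈ S, ball c s := by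
  have hne : {r : ℝ | 0 < r ∧ ∃ S : Finset E, Ω ⊆ ⋃ c ∈ S, ball c r}.Nonempty := by
    obtain ⟨R, hR⟩ := hΩ.subset_closedBall (0 : E)
    refine ⟨max R 0 + 1, by positivity, {0}, fun y hy => ?_⟩
    simp only [Finset.mem_singleton, iUnion_iUnion_eq_left, mem_ball]
    exact (mem_closedBall.1 (hR hy)).trans_lt (by linarith [le_max_left R 0])
  obtain ⟨r, ⟨-, S, hS⟩, hrs⟩ := (csInf_lt_iff ⟨0, fun _ hr => hr.1.le⟩ hne).1 hs
  exact ⟨S, hS.trans <| iUnion₂_mono fun c _ => ball_subset_ball hrs.le⟩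

lemma hmnc_range_le_of_eventually_mem {y : ℕ → E} {r : ℝ} (hr : 0 < r) {S : Finset E}
    (hy : ∀ᶠ n in atTop, y n ∈ ⋃ c ∈ S, ball c r) : hmnc (range y) ≤ r := by
  classical
  obtain ⟨N, hN⟩ := eventually_atTop.1 hy
  refine hmnc_le_of_subset_iUnion_ball hr (S := S ∪ (Finset.range N).image y) ?_
  rintro _ ⟨n, rfl⟩
  rcases lt_or_ge n N with hn | hn
  · have hy : y n ∈ (Finset.range N).image y := Finset.mem_image_of_mem y (Finset.mem_range.2 hn)
    exact mem_biUnion (Finset.mem_union_right _ hy) (mem_ball_self hr)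
  · exact biUnion_mono (fun c hc => Finset.mem_union_left _ hc) (fun _ _ => subset_rfl) (hN n hn)

end Hmnc

lemma hmnc_range_apply_le {𝕜 E F : Type*} [NontriviallyNormedField 𝕜]
    [NormedAddCommGroup E] [NormedSpace 𝕜 E] [NormedAddCommGroup F] [NormedSpace 𝕜 F]
    {T : ℕ → E →L[𝕜] F} (hT : ∀ x, CauchySeq fun n => T n x) {x : ℕ → E}
    (hx : IsBounded (range x)) {M s ε : ℝ} (hM : ∀ᶠ n in atTop, ‖T n‖ ≤ M)
    (hs : hmnc (range x) < s) (hε : 0 < ε) :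
    hmnc (range fun n => T n (x n)) ≤ M * s + ε := by
  classical
  obtain ⟨_, hM0⟩ := hM.exists
  replace hM0 : 0 ≤ M := (norm_nonneg _).trans hM0
  have hs0 : 0 < s := (hmnc_nonneg _).trans_lt hs
  obtain ⟨S, hS⟩ := exists_subset_iUnion_ball_of_hmnc_lt hx hs
  choose N hN using fun c => Metric.cauchySeq_iff'.1 (hT c) ε hε
  have hclose : ∀ᶠ n in atTop, ∀ c ∈ S, dist (T n c) (T (N c) c) < ε :=
    (eventually_all_finset S).2 fun c _ => eventually_atTop.2 ⟨N c, hN c⟩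
  refine hmnc_range_le_of_eventually_mem (S := S.image fun c => T (N c) c) (by positivity) ?_
  filter_upwards [hM, hclose] with n hTn hn
  obtain ⟨c, hc, hxc⟩ := mem_iUnion₂.1 (hS (mem_range_self n))
  have hfar : dist (T n (x n)) (T n c) ≤ M * s := calc
    _ ≤ ‖T n‖ * dist (x n) c := by
      simpa only [dist_eq_norm, map_sub] using (T n).le_opNorm (x n - c)
    _ ≤ M * s := mul_le_mul hTn (mem_ball.1 hxc).le dist_nonneg hM0
  refine mem_biUnion (Finset.mem_image_of_mem _ hc) (mem_ball.2 ?_)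
  linarith [dist_triangle (T n (x n)) (T n c) (T (N c) c), hn c hc]

lemma le_mul_of_forall_pos_le_add_mul_add {a L β : ℝ} (h : ∀ t > 0, a ≤ (L + t) * (β + t) + t) :
    a ≤ L * β := by
  have hlim : Tendsto (fun t : ℝ => (L + t) * (β + t) + t) (𝓝[>] 0) (𝓝 (L * β)) :=
    ((by fun_prop : Continuous fun t : ℝ => (L + t) * (β + t) + t).tendsto' 0 _
      (by simp)).mono_left nhdsWithin_le_nhds
  exact ge_of_tendsto hlim (eventually_nhdsWithin_of_forall h)

theorem stmt0 {E : Type*} [NormedAddCommGroup E] [NormedSpace ℝ E] [CompleteSpace E]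
    (T : ℕ → E →L[ℝ] E) (hT : ∀ x : E, CauchySeq (fun n => T n x))
    (x : ℕ → E) (hx : IsBounded (Set.range x)) :
    hmnc (Set.range fun n => T n (x n)) ≤
      (limsup (fun n => ‖T n‖) atTop) * hmnc (Set.range x) := by
  obtain ⟨C, hC⟩ : ∃ C, ∀ n, ‖T n‖ ≤ C := banach_steinhaus fun y => by
    obtain ⟨C, hC⟩ := isBounded_iff_forall_norm_le.1 (hT y).isBounded_range
    exact ⟨C, fun n => hC _ (mem_range_self n)⟩
  have hbdd : IsBoundedUnder (· ≤ ·) atTop fun n => ‖T n‖ := isBoundedUnder_of ⟨C, hC⟩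
  refine le_mul_of_forall_pos_le_add_mul_add fun t ht => hmnc_range_apply_le hT hx ?_ (by linarith) ht
  exact (eventually_lt_of_limsup_lt (by linarith) hbdd).mono fun _ => le_of_lt
end

section
/- Let {S_λ}_{λ∈[0,1]} be a family of C₀ semigroups on a Banach space E satisfying ‖S_λ(t)‖ ≤ e^{-ωt} for a fixed ω > 0, all t ≥ 0 and λ ∈ [0,1], and such that λ ↦ S_λ(t)x is continuous for each fixed t and x. Then for any t ≥ 0 and any bounded Ω ⊂ E, β(⋃_{λ∈[0,1]} S_λ(t) Ω) ≤ e^{-ωt} β(Ω). -/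
open Bornology Set

theorem stmt4 {E : Type*} [NormedAddCommGroup E] [NormedSpace ℝ E]
    (S : ℝ → ℝ → E →L[ℝ] E) (ω : ℝ) (hω : 0 < ω)
    (hsg1 : ∀ l ∈ Set.Icc (0:ℝ) 1, S l 0 = ContinuousLinearMap.id ℝ E)
    (hsg2 : ∀ l ∈ Set.Icc (0:ℝ) 1, ∀ s ≥ (0:ℝ), ∀ t ≥ (0:ℝ),
      S l (s + t) = (S l s).comp (S l t))
    (hsgc : ∀ l ∈ Set.Icc (0:ℝ) 1, ∀ x : E, ContinuousOn (fun t => S l t x) (Set.Ici 0))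
    (hnorm : ∀ l ∈ Set.Icc (0:ℝ) 1, ∀ t ≥ (0:ℝ), ‖S l t‖ ≤ Real.exp (-ω * t))
    (hcont : ∀ t ≥ (0:ℝ), ∀ x : E, ContinuousOn (fun l => S l t x) (Set.Icc 0 1))
    (t : ℝ) (ht : 0 ≤ t) (Ω : Set E) (hΩ : IsBounded Ω) :
    hmnc (⋃ l ∈ Set.Icc (0:ℝ) 1, (S l t) '' Ω) ≤ Real.exp (-ω * t) * hmnc Ω := by
  classical
  set M := Real.exp (-ω * t) with hM
  have hMpos : 0 < M := Real.exp_pos _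
  have hbdd : ∀ (U : Set E),
      BddBelow {r : ℝ | 0 < r ∧ ∃ F : Finset E, U ⊆ ⋃ x ∈ F, Metric.ball x r} :=
    fun U => ⟨0, fun r hr => le_of_lt hr.1⟩
  -- the cover set of Ω is nonempty
  obtain ⟨C, hC⟩ := hΩ.subset_ball 0
  have hne : ({r : ℝ | 0 < r ∧ ∃ F : Finset E, Ω ⊆ ⋃ x ∈ F, Metric.ball x r}).Nonempty := by
    refine ⟨max C 1, lt_max_of_lt_right one_pos, {0}, ?_⟩
    intro y hy
    simp only [Finset.mem_singleton, Set.mem_iUnion]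
    exact ⟨0, rfl, Metric.ball_subset_ball (le_max_left _ _) (hC hy)⟩
  refine le_of_forall_pos_le_add ?_
  intro ε hε
  -- choose r slightly above hmnc Ω with a finite net
  have hlt : sInf {r : ℝ | 0 < r ∧ ∃ F : Finset E, Ω ⊆ ⋃ x ∈ F, Metric.ball x r}
      < hmnc Ω + ε / (2 * M) := by
    have : 0 < ε / (2 * M) := by positivity
    simpa [hmnc] using lt_add_of_pos_right (hmnc Ω) this
  obtain ⟨r, ⟨hrpos, F, hF⟩, hrlt⟩ := exists_lt_of_csInf_lt hne hlt
  -- for each net point x, cover the compact curve {S l t x : l ∈ [0,1]} by ε/2-balls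
  have hnet : ∀ x : E, ∃ G : Finset E,
      (fun l => S l t x) '' Set.Icc (0:ℝ) 1 ⊆ ⋃ c ∈ (G : Set E), Metric.ball c (ε / 2) := by
    intro x
    have hcomp : IsCompact ((fun l => S l t x) '' Set.Icc (0:ℝ) 1) :=
      isCompact_Icc.image_of_continuousOn (hcont t ht x)
    obtain ⟨s, hsfin, hs⟩ := (Metric.totallyBounded_iff.mp hcomp.totallyBounded)
      (ε / 2) (by positivity)
    exact ⟨hsfin.toFinset, by simpa using hs⟩
  choose G hG using hnet
  set GG : Finset E := F.biUnion G with hGG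
  -- the covering radius for the union
  have hcov : (⋃ l ∈ Set.Icc (0:ℝ) 1, (S l t) '' Ω) ⊆
      ⋃ c ∈ GG, Metric.ball c (M * r + ε / 2) := by
    intro z hz
    simp only [Set.mem_iUnion] at hz
    obtain ⟨l, hl, y, hy, rfl⟩ := hz
    have hyF := hF hy
    simp only [Set.mem_iUnion] at hyF
    obtain ⟨x, hxF, hyx⟩ := hyF
    have hdist1 : dist (S l t y) (S l t x) < M * r := by
      rw [dist_eq_norm, ← map_sub]
      calc ‖S l t (y - x)‖ ≤ ‖S l t‖ * ‖y - x‖ := (S l t).le_opNorm _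
        _ ≤ M * ‖y - x‖ := by
            exact mul_le_mul_of_nonneg_right (hnorm l hl t ht) (norm_nonneg _)
        _ < M * r := by
            have : ‖y - x‖ < r := by simpa [dist_eq_norm] using hyx
            exact (mul_lt_mul_iff_right₀ hMpos).mpr this
    have hmem : S l t x ∈ (fun l => S l t x) '' Set.Icc (0:ℝ) 1 := ⟨l, hl, rfl⟩
    have := hG x hmem
    simp only [Set.mem_iUnion] at this
    obtain ⟨c, hc, hdist2⟩ := this
    simp only [Set.mem_iUnion]
    refine ⟨c, Finset.mem_biUnion.mpr ⟨x, hxF, hc⟩, ?_⟩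
    have : dist (S l t y) c < M * r + ε / 2 :=
      (dist_triangle _ (S l t x) _).trans_lt (add_lt_add hdist1 (Metric.mem_ball.mp hdist2))
    exact Metric.mem_ball.mpr this
  have hle : hmnc (⋃ l ∈ Set.Icc (0:ℝ) 1, (S l t) '' Ω) ≤ M * r + ε / 2 :=
    csInf_le (hbdd _) ⟨by positivity, GG, hcov⟩
  have : M * r + ε / 2 ≤ M * hmnc Ω + ε := by
    have h1 : M * r < M * (hmnc Ω + ε / (2 * M)) := (mul_lt_mul_iff_right₀ hMpos).mpr hrlt
    have h2 : M * (hmnc Ω + ε / (2 * M)) = M * hmnc Ω + ε / 2 := by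
      field_simp
    nlinarith
  linarith
end

section
/- Under the hypotheses of the previous compactness result, the solution map is continuous: if (x_n, λ_n) → (x₀, λ₀) in E × [0,1], then the mild solutions u(·; x_n, λ_n) converge to u(·; x₀, λ₀) in C([0,T], E). -/
open Bornology Set

/-!
Strong convergence `S λₙ t y → S λ₀ t y` at each `t` becomes uniform on `[0, T]` by comparing
`S λ t y` with the average `δ⁻¹ ∫ₜ^{t+δ} S λ s y`: the two differ at most by the mean oscillation
of `s ↦ S λ s y` on `[0, δ]`, and the averages for `λₙ` and `λ₀` differ by an `L¹` distance
that tends to zero by dominated convergence. Since all `S λ t` are contractions, the convergence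
is also uniform on the compact set `{F(τ, u₀ τ, λ₀)}`. Subtracting the Duhamel formulas, with
`F` uniformly Lipschitz near the compact orbit of `u₀` and `F(τ, u₀ τ, λₙ) → F(τ, u₀ τ, λ₀)`
uniformly, gives `ρₙ t ≤ aₙ + L ∫₀ᵗ ρₙ` for `ρₙ = ‖uₙ - u₀‖` as long as `ρₙ` stays below the
Lipschitz radius, where `aₙ → 0`. Grönwall's inequality and a continuity argument then give
`ρₙ ≤ aₙ e^{LT}` on all of `[0, T]`.
-/

open Filter Topology MeasureTheory Metric

theorem le_mul_exp_of_le_add_integral {ρ : ℝ → ℝ} {a L b : ℝ} (hL : 0 ≤ L)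
    (hρ : ContinuousOn ρ (Icc 0 b))
    (h : ∀ t ∈ Icc 0 b, ρ t ≤ a + L * ∫ τ in (0:ℝ)..t, ρ τ) :
    ∀ t ∈ Icc 0 b, ρ t ≤ a * Real.exp (L * t) := by
  intro t ht
  have hb : 0 ≤ b := ht.1.trans ht.2
  -- extend `ρ` continuously to `ℝ` so that `∫₀ᵗ ρ` is differentiable everywhere
  set ρ' : ℝ → ℝ := fun τ => ρ (projIcc 0 b hb τ)
  have hρ' : Continuous ρ' :=
    hρ.comp_continuous (continuous_subtype_val.comp continuous_projIcc)
      fun τ => (projIcc 0 b hb τ).2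
  have hρρ' : ∀ τ ∈ Icc 0 b, ρ' τ = ρ τ := fun τ hτ => by simp [ρ', projIcc_of_mem hb hτ]
  set G : ℝ → ℝ := fun s => a + L * ∫ τ in (0:ℝ)..s, ρ' τ
  have hG : ∀ s, HasDerivAt G (L * ρ' s) s := fun s =>
    ((intervalIntegral.integral_hasDerivAt_right (hρ'.intervalIntegrable _ _)
      (hρ'.stronglyMeasurableAtFilter _ _) hρ'.continuousAt).const_mul L).const_add a
  have hρG : ∀ s ∈ Icc 0 b, ρ s ≤ G s := fun s hs => by
    have : ∫ τ in (0:ℝ)..s, ρ' τ = ∫ τ in (0:ℝ)..s, ρ τ :=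
      intervalIntegral.integral_congr fun τ hτ => by
        rw [uIcc_of_le hs.1] at hτ
        exact hρρ' τ ⟨hτ.1, hτ.2.trans hs.2⟩
    simpa only [G, this] using h s hs
  have hGron := le_gronwallBound_of_liminf_deriv_right_le (f' := fun s => L * ρ' s) (δ := a)
    (K := L) (ε := 0)
    (fun s _ => (hG s).continuousAt.continuousWithinAt)
    (fun s _ r hr => (hG s).hasDerivWithinAt.liminf_right_slope_le hr) (by simp [G])
    (fun s hs => by
      rw [hρρ' s (Ico_subset_Icc_self hs), add_zero]
      exact mul_le_mul_of_nonneg_left (hρG s (Ico_subset_Icc_self hs)) hL) t ht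
  calc ρ t ≤ G t := hρG t ht
    _ ≤ _ := hGron
    _ = a * Real.exp (L * t) := by rw [sub_zero, gronwallBound_ε0]

theorem le_mul_exp_of_le_add_integral_of_le {ρ : ℝ → ℝ} {a L r T : ℝ} (ha : 0 ≤ a)
    (hL : 0 ≤ L) (hρ : ContinuousOn ρ (Icc 0 T)) (h0 : ρ 0 ≤ r)
    (hr : a * Real.exp (L * T) < r)
    (h : ∀ t ∈ Icc 0 T, (∀ σ ∈ Icc 0 t, ρ σ ≤ r) → ρ t ≤ a + L * ∫ τ in (0:ℝ)..t, ρ τ) :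
    ∀ t ∈ Icc 0 T, ρ t ≤ a * Real.exp (L * t) := by
  have hgron : ∀ t₁ ∈ Icc 0 T, (∀ σ ∈ Icc 0 t₁, ρ σ ≤ r) →
      ∀ t ∈ Icc 0 t₁, ρ t ≤ a * Real.exp (L * t) := fun t₁ ht₁ hr₁ =>
    le_mul_exp_of_le_add_integral hL (hρ.mono (Icc_subset_Icc le_rfl ht₁.2)) fun t ht =>
      h t ⟨ht.1, ht.2.trans ht₁.2⟩ fun σ hσ => hr₁ σ ⟨hσ.1, hσ.2.trans ht.2⟩
  intro t ht
  suffices hlt : ∀ σ ∈ Icc 0 T, ρ σ < r from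
    hgron T (right_mem_Icc.2 (ht.1.trans ht.2)) (fun σ hσ => (hlt σ hσ).le) t ht
  by_contra! hZ
  set Z := Icc 0 T ∩ ρ ⁻¹' Ici r
  have hZb : BddBelow Z := ⟨0, fun σ hσ => hσ.1.1⟩
  have ht₀ : sInf Z ∈ Z :=
    (hρ.preimage_isClosed_of_isClosed isClosed_Icc isClosed_Ici).csInf_mem hZ hZb
  set t₀ := sInf Z
  have hsub : Icc 0 t₀ ⊆ Icc 0 T := Icc_subset_Icc le_rfl ht₀.1.2
  obtain ⟨s, hs, hρs⟩ := intermediate_value_Icc ht₀.1.1 (hρ.mono hsub) ⟨h0, ht₀.2⟩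
  have hst₀ : s = t₀ := le_antisymm hs.2 (csInf_le hZb ⟨hsub hs, hρs.ge⟩)
  have hle : ∀ σ ∈ Icc 0 t₀, ρ σ ≤ r := fun σ hσ => by
    rcases hσ.2.lt_or_eq with hσt₀ | rfl
    · exact le_of_not_ge fun hrσ => (csInf_le hZb ⟨hsub hσ, hrσ⟩).not_gt hσt₀
    · exact hst₀ ▸ hρs.le
  have := hgron t₀ ht₀.1 hle t₀ (right_mem_Icc.2 ht₀.1.1)
  have hexp : a * Real.exp (L * t₀) ≤ a * Real.exp (L * T) :=
    mul_le_mul_of_nonneg_left (Real.exp_le_exp.2 (mul_le_mul_of_nonneg_left ht₀.1.2 hL)) ha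
  have hrt₀ : r ≤ ρ t₀ := ht₀.2
  linarith

theorem norm_add_integral_sub_add_integral_le {E : Type*} [NormedAddCommGroup E]
    [NormedSpace ℝ E] {x y : E} {f g : ℝ → E} {β : ℝ → ℝ} {a b : ℝ} (hab : a ≤ b)
    (hf : IntervalIntegrable f volume a b) (hg : IntervalIntegrable g volume a b)
    (hβ : IntervalIntegrable β volume a b) (hfg : ∀ τ ∈ Icc a b, ‖f τ - g τ‖ ≤ β τ) :
    ‖(x + ∫ τ in a..b, f τ) - (y + ∫ τ in a..b, g τ)‖ ≤ ‖x - y‖ + ∫ τ in a..b, β τ := by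
  rw [add_sub_add_comm, ← intervalIntegral.integral_sub hf hg]
  exact (norm_add_le _ _).trans (add_le_add_right
    ((intervalIntegral.norm_integral_le_integral_norm hab).trans
      (intervalIntegral.integral_mono_on hab (hf.sub hg).norm hβ hfg)) _)

section Operators

variable {𝕜 E F : Type*} [NontriviallyNormedField 𝕜] [NormedAddCommGroup E] [NormedSpace 𝕜 E]
  [NormedAddCommGroup F] [NormedSpace 𝕜 F]

theorem ContinuousOn.clm_apply_of_norm_le {X : Type*} [TopologicalSpace X] {A : X → E →L[𝕜] F}
    {f : X → E} {s : Set X} {C : ℝ} (hA : ∀ y, ContinuousOn (fun x => A x y) s)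
    (hC : ∀ x ∈ s, ‖A x‖ ≤ C) (hf : ContinuousOn f s) :
    ContinuousOn (fun x => A x (f x)) s := by
  intro x₀ hx₀
  have hsmall : Tendsto (fun x => A x (f x - f x₀)) (𝓝[s] x₀) (𝓝 0) := by
    refine squeeze_zero_norm' (eventually_mem_nhdsWithin.mono fun x hx =>
      (A x).le_of_opNorm_le (hC x hx) _) ?_
    simpa using ((hf x₀ hx₀).tendsto.sub_const (f x₀)).norm.const_mul C
  have := hsmall.add (hA (f x₀) x₀ hx₀).tendsto
  simp only [← map_add, sub_add_cancel, zero_add] at this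
  exact this

theorem TendstoUniformlyOn.clm_apply_prod_of_isCompact {α ι : Type*} {p : Filter ι}
    {A : ι → α → E →L[𝕜] F} {B : α → E →L[𝕜] F} {s : Set α} {K : Set E} {C : ℝ}
    (hK : IsCompact K) (hA : ∀ i, ∀ a ∈ s, ‖A i a‖ ≤ C) (hB : ∀ a ∈ s, ‖B a‖ ≤ C)
    (h : ∀ y ∈ K, TendstoUniformlyOn (fun i a => A i a y) (fun a => B a y) p s) :
    TendstoUniformlyOn (fun i (q : α × E) => A i q.1 q.2) (fun q => B q.1 q.2) p (s ×ˢ K) := by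
  rw [Metric.tendstoUniformlyOn_iff]
  intro ε hε
  obtain ⟨r, hr, hCr⟩ := exists_pos_mul_lt (by positivity : 0 < ε / 3) C
  obtain ⟨t, htK, htfin, hcover⟩ := hK.finite_cover_balls hr
  have hev : ∀ᶠ i in p, ∀ z ∈ t, ∀ a ∈ s, dist (B a z) (A i a z) < ε / 3 :=
    (eventually_all_finite htfin).2 fun z hz =>
      Metric.tendstoUniformlyOn_iff.1 (h z (htK hz)) _ (by positivity)
  filter_upwards [hev] with i hi
  rintro ⟨a, y⟩ ⟨ha, hy⟩
  obtain ⟨z, hz, hyz⟩ := mem_iUnion₂.1 (hcover hy)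
  have hclose : ∀ M : E →L[𝕜] F, ‖M‖ ≤ C → dist (M y) (M z) < ε / 3 := fun M hM =>
    (M.dist_le_opNorm y z).trans_lt <| (mul_le_mul hM (mem_ball.1 hyz).le dist_nonneg
      ((norm_nonneg _).trans (hB a ha))).trans_lt hCr
  calc dist (B a y) (A i a y)
      ≤ dist (B a y) (B a z) + dist (B a z) (A i a z) + dist (A i a z) (A i a y) :=
        dist_triangle4 _ _ _ _
    _ < ε / 3 + ε / 3 + ε / 3 := by
        gcongr
        · exact hclose _ (hB a ha)
        · exact hi z hz a ha
        · rw [dist_comm]; exact hclose _ (hA i a ha)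
    _ = ε := by ring

end Operators

theorem IsCompact.exists_forall_closedBall_norm_sub_le {ι E F : Type*}
    [SeminormedAddCommGroup E] [SeminormedAddCommGroup F] {K : Set E} (hK : IsCompact K)
    {s : Set ι} {f : ι → E → F}
    (hf : ∀ x, ∃ δ > (0:ℝ), ∃ L > (0:ℝ), ∀ x₁ ∈ ball x δ, ∀ x₂ ∈ ball x δ, ∀ i ∈ s,
      ‖f i x₁ - f i x₂‖ ≤ L * ‖x₁ - x₂‖) :
    ∃ δ > (0:ℝ), ∃ L ≥ (0:ℝ), ∀ p ∈ K, ∀ z ∈ closedBall p δ, ∀ i ∈ s,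
      ‖f i z - f i p‖ ≤ L * ‖z - p‖ := by
  choose δ hδ L hL hlip using hf
  obtain ⟨t, ht⟩ := hK.elim_finite_subcover (fun x => ball x (δ x)) (fun _ => isOpen_ball)
    fun x _ => mem_iUnion.2 ⟨x, mem_ball_self (hδ x)⟩
  obtain ⟨ε, hε, hleb⟩ := lebesgue_number_lemma_of_metric hK
    (c := fun q : t => ball (q : E) (δ q)) (fun _ => isOpen_ball)
    (by simpa [iUnion_subtype] using ht)
  refine ⟨ε / 2, half_pos hε, ∑ q ∈ t, L q, Finset.sum_nonneg fun q _ => (hL q).le,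
    fun p hp z hz i hi => ?_⟩
  obtain ⟨q, hq⟩ := hleb p hp
  have hsub : closedBall p (ε / 2) ⊆ ball (q : E) (δ q) :=
    (closedBall_subset_ball (half_lt_self hε)).trans hq
  calc ‖f i z - f i p‖ ≤ L q * ‖z - p‖ :=
        hlip q z (hsub hz) p (hsub (mem_closedBall_self (half_pos hε).le)) i hi
    _ ≤ (∑ q ∈ t, L q) * ‖z - p‖ := mul_le_mul_of_nonneg_right
        (Finset.single_le_sum (fun q _ => (hL q).le) q.2) (norm_nonneg _)

section Semigroup

variable {E : Type*} [NormedAddCommGroup E] [NormedSpace ℝ E]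

structure IsContractionSemigroup (P : ℝ → E →L[ℝ] E) : Prop where
  map_zero : P 0 = ContinuousLinearMap.id ℝ E
  map_add : ∀ s ≥ (0:ℝ), ∀ t ≥ (0:ℝ), P (s + t) = (P s).comp (P t)
  continuousOn_apply : ∀ x, ContinuousOn (fun t => P t x) (Ici 0)
  norm_le_one : ∀ t ≥ (0:ℝ), ‖P t‖ ≤ 1

namespace IsContractionSemigroup

variable {P Q : ℝ → E →L[ℝ] E}

theorem norm_apply_le (hP : IsContractionSemigroup P) {t : ℝ} (ht : 0 ≤ t) (x : E) :
    ‖P t x‖ ≤ ‖x‖ :=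
  (P t).le_of_opNorm_le (hP.norm_le_one t ht) x |>.trans_eq (one_mul _)

theorem norm_apply_sub_le (hP : IsContractionSemigroup P) {t : ℝ} (ht : 0 ≤ t) (x y w : E) :
    ‖P t x - w‖ ≤ ‖x - y‖ + ‖P t y - w‖ := by
  calc ‖P t x - w‖ = ‖P t (x - y) + (P t y - w)‖ := by rw [map_sub, sub_add_sub_cancel]
    _ ≤ ‖x - y‖ + ‖P t y - w‖ := (norm_add_le _ _).trans (add_le_add_left (hP.norm_apply_le ht _) _)

theorem intervalIntegrable_apply (hP : IsContractionSemigroup P) (x : E) {a b : ℝ}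
    (ha : 0 ≤ a) (hb : 0 ≤ b) : IntervalIntegrable (fun s => P s x) volume a b :=
  ((hP.continuousOn_apply x).mono fun _ hs => le_trans (le_min ha hb) hs.1).intervalIntegrable

theorem continuousOn_comp_sub (hP : IsContractionSemigroup P) {t : ℝ} {f : ℝ → E}
    (hf : ContinuousOn f (Icc 0 t)) : ContinuousOn (fun τ => P (t - τ) (f τ)) (Icc 0 t) :=
  ContinuousOn.clm_apply_of_norm_le
    (fun y => (hP.continuousOn_apply y).comp (continuous_const.sub continuous_id).continuousOn
      fun _ hτ => sub_nonneg.2 hτ.2)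
    (fun _ hτ => hP.norm_le_one _ (sub_nonneg.2 hτ.2)) hf

theorem tendsto_integral_norm_apply_sub {ι : Type*} {p : Filter ι} [p.IsCountablyGenerated]
    {P : ι → ℝ → E →L[ℝ] E} (hP : ∀ i, IsContractionSemigroup (P i))
    (hQ : IsContractionSemigroup Q) (y : E)
    (h : ∀ s ≥ (0:ℝ), Tendsto (fun i => P i s y) p (𝓝 (Q s y))) {b : ℝ} (hb : 0 ≤ b) :
    Tendsto (fun i => ∫ s in (0:ℝ)..b, ‖P i s y - Q s y‖) p (𝓝 0) := by
  have hpos : ∀ {s}, s ∈ uIoc 0 b → 0 ≤ s := fun hs => by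
    rw [uIoc_of_le hb] at hs
    exact hs.1.le
  simpa using intervalIntegral.tendsto_integral_filter_of_dominated_convergence
    (fun _ => 2 * ‖y‖)
    (Eventually.of_forall fun i => (((hP i).intervalIntegrable_apply y le_rfl hb).sub
      (hQ.intervalIntegrable_apply y le_rfl hb)).norm.def'.aestronglyMeasurable)
    (Eventually.of_forall fun i => Eventually.of_forall fun s hs => by
      rw [norm_norm, two_mul]
      exact (norm_sub_le _ _).trans (add_le_add ((hP i).norm_apply_le (hpos hs) y)
        (hQ.norm_apply_le (hpos hs) y)))
    intervalIntegrable_const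
    (Eventually.of_forall fun s hs => tendsto_iff_norm_sub_tendsto_zero.1 (h s (hpos hs)))

variable [CompleteSpace E]

theorem norm_apply_sub_average_le (hP : IsContractionSemigroup P) (y : E) {t δ : ℝ}
    (ht : 0 ≤ t) (hδ : 0 < δ) :
    ‖P t y - δ⁻¹ • ∫ s in t..t + δ, P s y‖ ≤ δ⁻¹ * ∫ s in (0:ℝ)..δ, ‖P s y - y‖ := by
  have hint := hP.intervalIntegrable_apply y le_rfl hδ.le
  have hshift : ∫ s in t..t + δ, P s y = P t (∫ s in (0:ℝ)..δ, P s y) := by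
    rw [← ContinuousLinearMap.intervalIntegral_comp_comm _ hint]
    have := intervalIntegral.integral_comp_add_left (a := 0) (b := δ) (fun s => P s y) t
    rw [add_zero] at this
    rw [← this]
    refine intervalIntegral.integral_congr fun s hs => ?_
    rw [uIcc_of_le hδ.le] at hs
    simp [hP.map_add t ht s hs.1]
  have hy : y = δ⁻¹ • ∫ _ in (0:ℝ)..δ, y := by
    rw [intervalIntegral.integral_const, sub_zero, smul_smul, inv_mul_cancel₀ hδ.ne', one_smul]
  calc ‖P t y - δ⁻¹ • ∫ s in t..t + δ, P s y‖
      = ‖P t (δ⁻¹ • ∫ s in (0:ℝ)..δ, (y - P s y))‖ := by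
        rw [intervalIntegral.integral_sub intervalIntegrable_const hint, smul_sub, ← hy,
          map_sub, map_smul, hshift]
    _ ≤ δ⁻¹ * ∫ s in (0:ℝ)..δ, ‖y - P s y‖ := by
        refine (hP.norm_apply_le ht _).trans ?_
        rw [norm_smul, norm_inv, Real.norm_of_nonneg hδ.le]
        exact mul_le_mul_of_nonneg_left
          (intervalIntegral.norm_integral_le_integral_norm hδ.le) (by positivity)
    _ = δ⁻¹ * ∫ s in (0:ℝ)..δ, ‖P s y - y‖ := by simp_rw [norm_sub_rev y]

theorem norm_apply_sub_apply_le_integral (hP : IsContractionSemigroup P)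
    (hQ : IsContractionSemigroup Q) (y : E) {t δ : ℝ} (ht : 0 ≤ t) (hδ : 0 < δ) :
    ‖P t y - Q t y‖ ≤ δ⁻¹ * ((∫ s in (0:ℝ)..δ, ‖P s y - y‖)
      + (∫ s in t..t + δ, ‖P s y - Q s y‖) + ∫ s in (0:ℝ)..δ, ‖Q s y - y‖) := by
  set avgP := δ⁻¹ • ∫ s in t..t + δ, P s y
  set avgQ := δ⁻¹ • ∫ s in t..t + δ, Q s y
  have havg : ‖avgP - avgQ‖ ≤ δ⁻¹ * ∫ s in t..t + δ, ‖P s y - Q s y‖ := by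
    rw [← smul_sub, ← intervalIntegral.integral_sub (hP.intervalIntegrable_apply y ht
      (by linarith)) (hQ.intervalIntegrable_apply y ht (by linarith)), norm_smul, norm_inv,
      Real.norm_of_nonneg hδ.le]
    exact mul_le_mul_of_nonneg_left (intervalIntegral.norm_integral_le_integral_norm
      (by linarith)) (by positivity)
  have hQ_avg := hQ.norm_apply_sub_average_le y ht hδ
  rw [norm_sub_rev] at hQ_avg
  calc ‖P t y - Q t y‖ ≤ ‖P t y - avgP‖ + (‖avgP - avgQ‖ + ‖avgQ - Q t y‖) :=
        (norm_sub_le_norm_sub_add_norm_sub _ avgP _).trans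
          (add_le_add_right (norm_sub_le_norm_sub_add_norm_sub _ avgQ _) _)
    _ ≤ _ := by
        have := add_le_add (hP.norm_apply_sub_average_le y ht hδ) (add_le_add havg hQ_avg)
        linarith

theorem norm_apply_sub_apply_le (hP : IsContractionSemigroup P) (hQ : IsContractionSemigroup Q)
    (y : E) {t T δ η : ℝ} (ht : t ∈ Icc 0 T) (hδ : 0 < δ)
    (hη : ∀ s ∈ Icc 0 δ, ‖Q s y - y‖ ≤ η) :
    ‖P t y - Q t y‖ ≤ 2 * η + 2 * δ⁻¹ * ∫ s in (0:ℝ)..T + δ, ‖P s y - Q s y‖ := by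
  set I := ∫ s in (0:ℝ)..T + δ, ‖P s y - Q s y‖
  have ht0 : 0 ≤ t := ht.1
  have hT : 0 ≤ T := ht0.trans ht.2
  have hPQ : ∀ a b : ℝ, 0 ≤ a → 0 ≤ b →
      IntervalIntegrable (fun s => ‖P s y - Q s y‖) volume a b := fun a b ha hb =>
    ((hP.intervalIntegrable_apply y ha hb).sub (hQ.intervalIntegrable_apply y ha hb)).norm
  have hQy : IntervalIntegrable (fun s => ‖Q s y - y‖) volume 0 δ :=
    ((hQ.intervalIntegrable_apply y le_rfl hδ.le).sub intervalIntegrable_const).norm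
  have hle_I : ∀ a b : ℝ, 0 ≤ a → a ≤ b → b ≤ T + δ → ∫ s in a..b, ‖P s y - Q s y‖ ≤ I :=
    fun a b ha hab hb => intervalIntegral.integral_mono_interval ha hab hb
      (Eventually.of_forall fun _ => norm_nonneg _) (hPQ 0 (T + δ) le_rfl (by linarith))
  have hQη : ∫ s in (0:ℝ)..δ, ‖Q s y - y‖ ≤ δ * η := by
    simpa using intervalIntegral.integral_mono_on hδ.le hQy intervalIntegrable_const hη
  have hPη : ∫ s in (0:ℝ)..δ, ‖P s y - y‖ ≤ I + δ * η := by
    calc ∫ s in (0:ℝ)..δ, ‖P s y - y‖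
        ≤ ∫ s in (0:ℝ)..δ, (‖P s y - Q s y‖ + ‖Q s y - y‖) :=
          intervalIntegral.integral_mono_on hδ.le
            ((hP.intervalIntegrable_apply y le_rfl hδ.le).sub intervalIntegrable_const).norm
            ((hPQ 0 δ le_rfl hδ.le).add hQy) fun s _ => norm_sub_le_norm_sub_add_norm_sub _ _ _
      _ ≤ I + δ * η := by
          rw [intervalIntegral.integral_add (hPQ 0 δ le_rfl hδ.le) hQy]
          exact add_le_add (hle_I 0 δ le_rfl hδ.le (by linarith)) hQη
  calc ‖P t y - Q t y‖
      ≤ δ⁻¹ * ((I + δ * η) + I + δ * η) := by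
        refine (hP.norm_apply_sub_apply_le_integral hQ y ht0 hδ).trans ?_
        gcongr
        exact hle_I t (t + δ) ht0 (by linarith) (by linarith [ht.2])
    _ = 2 * η + 2 * δ⁻¹ * I := by field_simp; ring

theorem tendstoUniformlyOn_apply {ι : Type*} {p : Filter ι} [p.IsCountablyGenerated]
    {P : ι → ℝ → E →L[ℝ] E} (hP : ∀ i, IsContractionSemigroup (P i))
    (hQ : IsContractionSemigroup Q) (y : E)
    (h : ∀ s ≥ (0:ℝ), Tendsto (fun i => P i s y) p (𝓝 (Q s y))) {T : ℝ} (hT : 0 ≤ T) :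
    TendstoUniformlyOn (fun i s => P i s y) (fun s => Q s y) p (Icc 0 T) := by
  rw [Metric.tendstoUniformlyOn_iff]
  intro ε hε
  obtain ⟨δ, hδ, hQδ⟩ : ∃ δ > 0, ∀ s ∈ Icc 0 δ, ‖Q s y - y‖ ≤ ε / 4 := by
    obtain ⟨δ, hδ, hclose⟩ := Metric.continuousWithinAt_iff.1
      (hQ.continuousOn_apply y 0 self_mem_Ici) (ε / 4) (by positivity)
    refine ⟨δ / 2, half_pos hδ, fun s hs => ?_⟩
    have := hclose hs.1 (by rw [Real.dist_eq, sub_zero, abs_of_nonneg hs.1]; linarith [hs.2])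
    rw [dist_eq_norm, hQ.map_zero] at this
    exact this.le
  have hev : ∀ᶠ i in p, 2 * δ⁻¹ * ∫ s in (0:ℝ)..T + δ, ‖P i s y - Q s y‖ < ε / 2 := by
    have := (tendsto_integral_norm_apply_sub hP hQ y h (b := T + δ) (by linarith)).const_mul
      (2 * δ⁻¹)
    rw [mul_zero] at this
    exact this.eventually_lt_const (by positivity)
  filter_upwards [hev] with i hi t ht
  rw [dist_comm, dist_eq_norm]
  linarith [(hP i).norm_apply_sub_apply_le hQ y ht hδ hQδ]

end IsContractionSemigroup

end Semigroup

section Mild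

variable {E : Type*} [NormedAddCommGroup E] [NormedSpace ℝ E]

structure IsMildSolution (P : ℝ → E →L[ℝ] E) (G : ℝ → E → E) (T : ℝ) (x : E) (u : ℝ → E) :
    Prop where
  continuousOn : ContinuousOn u (Icc 0 T)
  eq_duhamel : ∀ t ∈ Icc 0 T, u t = P t x + ∫ τ in (0:ℝ)..t, P (t - τ) (G τ (u τ))

namespace IsMildSolution

variable {P Q : ℝ → E →L[ℝ] E} {G H : ℝ → E → E} {T : ℝ} {x y : E} {u v : ℝ → E}

theorem apply_zero (hP : IsContractionSemigroup P) (hu : IsMildSolution P G T x u)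
    (hT : 0 ≤ T) : u 0 = x := by
  rw [hu.eq_duhamel 0 (left_mem_Icc.2 hT), intervalIntegral.integral_same, add_zero,
    hP.map_zero, ContinuousLinearMap.id_apply]

theorem intervalIntegrable_integrand (hP : IsContractionSemigroup P) (hG : Continuous ↿G)
    (hu : IsMildSolution P G T x u) {t : ℝ} (ht : t ∈ Icc 0 T) :
    IntervalIntegrable (fun τ => P (t - τ) (G τ (u τ))) volume 0 t :=
  (hP.continuousOn_comp_sub (hG.comp_continuousOn (continuousOn_id.prodMk
    (hu.continuousOn.mono (Icc_subset_Icc le_rfl ht.2))))).intervalIntegrable_of_Icc ht.1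

section Estimates

variable (hP : IsContractionSemigroup P) (hQ : IsContractionSemigroup Q) (hG : Continuous ↿G)
  (hH : Continuous ↿H) (hu : IsMildSolution P G T x u) (hv : IsMildSolution Q H T y v)
  {η δ L : ℝ} (hxy : ‖x - y‖ ≤ η) (hPQy : ∀ s ∈ Icc 0 T, ‖P s y - Q s y‖ ≤ η)
  (hPQH : ∀ s ∈ Icc 0 T, ∀ τ ∈ Icc 0 T, ‖P s (H τ (v τ)) - Q s (H τ (v τ))‖ ≤ η)
  (hGH : ∀ τ ∈ Icc 0 T, ‖G τ (v τ) - H τ (v τ)‖ ≤ η)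
  (hlip : ∀ τ ∈ Icc 0 T, ∀ z ∈ closedBall (v τ) δ, ‖G τ z - G τ (v τ)‖ ≤ L * ‖z - v τ‖)
include hP hQ hG hH hu hv hxy hPQy hPQH hGH hlip

theorem norm_sub_le_add_integral {t : ℝ} (ht : t ∈ Icc 0 T)
    (hclose : ∀ τ ∈ Icc 0 t, ‖u τ - v τ‖ ≤ δ) :
    ‖u t - v t‖ ≤ 2 * (1 + T) * η + L * ∫ τ in (0:ℝ)..t, ‖u τ - v τ‖ := by
  have hsub : Icc 0 t ⊆ Icc 0 T := Icc_subset_Icc le_rfl ht.2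
  have hη : 0 ≤ η := (norm_nonneg _).trans hxy
  have hρ : IntervalIntegrable (fun τ => ‖u τ - v τ‖) volume 0 t :=
    ((hu.continuousOn.sub hv.continuousOn).norm.mono hsub).intervalIntegrable_of_Icc ht.1
  have hpt : ∀ τ ∈ Icc 0 t, ‖P (t - τ) (G τ (u τ)) - Q (t - τ) (H τ (v τ))‖
      ≤ L * ‖u τ - v τ‖ + 2 * η := by
    intro τ hτ
    have hs : t - τ ∈ Icc 0 T := ⟨sub_nonneg.2 hτ.2, by linarith [hτ.1, ht.2]⟩
    have hGu := hlip τ (hsub hτ) (u τ) (mem_closedBall_iff_norm.2 (hclose τ hτ))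
    calc ‖P (t - τ) (G τ (u τ)) - Q (t - τ) (H τ (v τ))‖
        ≤ ‖G τ (u τ) - H τ (v τ)‖ + ‖P (t - τ) (H τ (v τ)) - Q (t - τ) (H τ (v τ))‖ :=
          hP.norm_apply_sub_le hs.1 _ _ _
      _ ≤ (‖G τ (u τ) - G τ (v τ)‖ + ‖G τ (v τ) - H τ (v τ)‖) + η :=
          add_le_add (norm_sub_le_norm_sub_add_norm_sub _ _ _) (hPQH _ hs τ (hsub hτ))
      _ ≤ L * ‖u τ - v τ‖ + 2 * η := by linarith [hGH τ (hsub hτ)]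
  calc ‖u t - v t‖
      = ‖(P t x + ∫ τ in (0:ℝ)..t, P (t - τ) (G τ (u τ)))
          - (Q t y + ∫ τ in (0:ℝ)..t, Q (t - τ) (H τ (v τ)))‖ := by
        rw [← hu.eq_duhamel t ht, ← hv.eq_duhamel t ht]
    _ ≤ ‖P t x - Q t y‖ + ∫ τ in (0:ℝ)..t, (L * ‖u τ - v τ‖ + 2 * η) :=
        norm_add_integral_sub_add_integral_le ht.1 (hu.intervalIntegrable_integrand hP hG ht)
          (hv.intervalIntegrable_integrand hQ hH ht) ((hρ.const_mul L).add intervalIntegrable_const)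
          hpt
    _ = ‖P t x - Q t y‖ + (L * (∫ τ in (0:ℝ)..t, ‖u τ - v τ‖) + t * (2 * η)) := by
        rw [intervalIntegral.integral_add (hρ.const_mul L) intervalIntegrable_const,
          intervalIntegral.integral_const_mul, intervalIntegral.integral_const, smul_eq_mul,
          sub_zero]
    _ ≤ 2 * (1 + T) * η + L * ∫ τ in (0:ℝ)..t, ‖u τ - v τ‖ := by
        have := (hP.norm_apply_sub_le ht.1 x y _).trans (add_le_add hxy (hPQy t ht))
        nlinarith [mul_le_mul_of_nonneg_right ht.2 hη]

theorem norm_sub_le (hL : 0 ≤ L) (hsmall : 2 * (1 + T) * η * Real.exp (L * T) < δ) :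
    ∀ t ∈ Icc 0 T, ‖u t - v t‖ ≤ 2 * (1 + T) * η * Real.exp (L * T) := by
  intro t ht
  have hT : 0 ≤ T := ht.1.trans ht.2
  have hη : 0 ≤ η := (norm_nonneg _).trans hxy
  have ha : 0 ≤ 2 * (1 + T) * η := by positivity
  have h0 : ‖u 0 - v 0‖ ≤ δ := by
    rw [hu.apply_zero hP hT, hv.apply_zero hQ hT]
    have : η ≤ 2 * (1 + T) * η * Real.exp (L * T) :=
      (by nlinarith : η ≤ 2 * (1 + T) * η).trans
        (le_mul_of_one_le_right ha (Real.one_le_exp (by positivity)))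
    linarith
  calc ‖u t - v t‖ ≤ 2 * (1 + T) * η * Real.exp (L * t) :=
        le_mul_exp_of_le_add_integral_of_le ha hL (hu.continuousOn.sub hv.continuousOn).norm h0
          hsmall (fun t ht hclose => norm_sub_le_add_integral hP hQ hG hH hu hv hxy hPQy hPQH
            hGH hlip ht hclose) t ht
    _ ≤ 2 * (1 + T) * η * Real.exp (L * T) := by gcongr; exact ht.2

end Estimates

theorem tendstoUniformlyOn {ι : Type*} {p : Filter ι} {P : ι → ℝ → E →L[ℝ] E}
    {G : ι → ℝ → E → E} {x : ι → E} {u : ι → ℝ → E}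
    (hP : ∀ i, IsContractionSemigroup (P i)) (hQ : IsContractionSemigroup Q)
    (hG : ∀ i, Continuous ↿(G i)) (hH : Continuous ↿H)
    (hu : ∀ i, IsMildSolution (P i) (G i) T (x i) (u i)) (hv : IsMildSolution Q H T y v)
    (hx : Tendsto x p (𝓝 y))
    (hPQ : ∀ z, TendstoUniformlyOn (fun i s => P i s z) (fun s => Q s z) p (Icc 0 T))
    (hGH : TendstoUniformlyOn (fun i τ => G i τ (v τ)) (fun τ => H τ (v τ)) p (Icc 0 T))
    (hlip : ∃ δ > (0:ℝ), ∃ L ≥ (0:ℝ), ∀ i, ∀ τ ∈ Icc 0 T, ∀ z ∈ closedBall (v τ) δ,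
      ‖G i τ z - G i τ (v τ)‖ ≤ L * ‖z - v τ‖) :
    TendstoUniformlyOn u v p (Icc 0 T) := by
  obtain ⟨δ, hδ, L, hL, hlip⟩ := hlip
  rw [Metric.tendstoUniformlyOn_iff]
  intro ε hε
  obtain ⟨η, hη, hCη⟩ :=
    exists_pos_mul_lt (lt_min hε hδ) (2 * (1 + T) * Real.exp (L * T))
  have hK : IsCompact ((fun τ => H τ (v τ)) '' Icc 0 T) :=
    isCompact_Icc.image_of_continuousOn (hH.comp_continuousOn
      (continuousOn_id.prodMk hv.continuousOn))
  have hPQK := TendstoUniformlyOn.clm_apply_prod_of_isCompact hK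
    (fun i s hs => (hP i).norm_le_one s hs.1) (fun s hs => hQ.norm_le_one s hs.1)
    fun z _ => hPQ z
  filter_upwards [hx.eventually (ball_mem_nhds y hη),
    Metric.tendstoUniformlyOn_iff.1 (hPQ y) η hη, Metric.tendstoUniformlyOn_iff.1 hPQK η hη,
    Metric.tendstoUniformlyOn_iff.1 hGH η hη] with i hxi hPQyi hPQKi hGHi t ht
  rw [dist_comm, dist_eq_norm]
  refine ((hu i).norm_sub_le (hP i) hQ (hG i) hH hv (mem_ball_iff_norm.1 hxi).le
    (fun s hs => by rw [← dist_eq_norm']; exact (hPQyi s hs).le)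
    (fun s hs τ hτ => by
      rw [← dist_eq_norm']; exact (hPQKi (s, H τ (v τ)) ⟨hs, mem_image_of_mem _ hτ⟩).le)
    (fun τ hτ => by rw [← dist_eq_norm']; exact (hGHi τ hτ).le) (hlip i) hL ?_ t ht).trans_lt ?_
  · linarith [min_le_right ε δ]
  · linarith [min_le_left ε δ]

end IsMildSolution

end Mild

theorem stmt12_general {E : Type*} [NormedAddCommGroup E] [NormedSpace ℝ E] [CompleteSpace E]
    (S : ℝ → ℝ → E →L[ℝ] E) (ω : ℝ) (hω : 0 < ω)
    (hsg1 : ∀ l ∈ Set.Icc (0:ℝ) 1, S l 0 = ContinuousLinearMap.id ℝ E)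
    (hsg2 : ∀ l ∈ Set.Icc (0:ℝ) 1, ∀ s ≥ (0:ℝ), ∀ t ≥ (0:ℝ),
      S l (s + t) = (S l s).comp (S l t))
    (hsgc : ∀ l ∈ Set.Icc (0:ℝ) 1, ∀ x : E, ContinuousOn (fun t => S l t x) (Set.Ici 0))
    (hnorm : ∀ l ∈ Set.Icc (0:ℝ) 1, ∀ t ≥ (0:ℝ), ‖S l t‖ ≤ Real.exp (-ω * t))
    (hresc : ∀ t ≥ (0:ℝ), ∀ x : E, ContinuousOn (fun l => S l t x) (Set.Icc 0 1))
    (T : ℝ) (hT : 0 < T)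
    (F : ℝ → E → ℝ → E)
    (hFc : Continuous fun p : ℝ × E × ℝ => F p.1 p.2.1 p.2.2)
    (hFl : ∀ x : E, ∃ δ > (0:ℝ), ∃ L > (0:ℝ), ∀ x₁ ∈ Metric.ball x δ,
      ∀ x₂ ∈ Metric.ball x δ, ∀ t ∈ Set.Icc (0:ℝ) T, ∀ l ∈ Set.Icc (0:ℝ) 1,
        ‖F t x₁ l - F t x₂ l‖ ≤ L * ‖x₁ - x₂‖)
    (sol : E → ℝ → ℝ → E)
    (hsolc : ∀ x : E, ∀ l ∈ Set.Icc (0:ℝ) 1, ContinuousOn (sol x l) (Set.Icc 0 T))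
    (hmild : ∀ x : E, ∀ l ∈ Set.Icc (0:ℝ) 1, ∀ t ∈ Set.Icc (0:ℝ) T,
      sol x l t = S l t x + ∫ τ in (0:ℝ)..t, S l (t - τ) (F τ (sol x l τ) l)) :
    ∀ (xs : ℕ → E) (ls : ℕ → ℝ) (x₀ : E) (l₀ : ℝ), (∀ n, ls n ∈ Set.Icc (0:ℝ) 1) →
      l₀ ∈ Set.Icc (0:ℝ) 1 →
      Filter.Tendsto xs Filter.atTop (nhds x₀) →
      Filter.Tendsto ls Filter.atTop (nhds l₀) →
      TendstoUniformlyOn (fun n t => sol (xs n) (ls n) t) (sol x₀ l₀)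
        Filter.atTop (Set.Icc 0 T) := by
  intro xs ls x₀ l₀ hls hl₀ hxs hlt
  have hS : ∀ l ∈ Icc (0:ℝ) 1, IsContractionSemigroup (S l) := fun l hl =>
    ⟨hsg1 l hl, hsg2 l hl, hsgc l hl, fun t ht =>
      (hnorm l hl t ht).trans (Real.exp_le_one_iff.2 (by nlinarith))⟩
  have hFcont : ∀ l, Continuous ↿(fun τ z => F τ z l) := fun l =>
    hFc.comp (continuous_fst.prodMk (continuous_snd.prodMk continuous_const))
  have hsol : ∀ x, ∀ l ∈ Icc (0:ℝ) 1, IsMildSolution (S l) (fun τ z => F τ z l) T x (sol x l) :=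
    fun x l hl => ⟨hsolc x l hl, hmild x l hl⟩
  have hlt' : Tendsto ls atTop (𝓝[Icc 0 1] l₀) := tendsto_nhdsWithin_iff.2 ⟨hlt, .of_forall hls⟩
  have hFsol : UniformContinuousOn ↿(fun l τ => F τ (sol x₀ l₀ τ) l) (Icc 0 1 ×ˢ Icc 0 T) :=
    (isCompact_Icc.prod isCompact_Icc).uniformContinuousOn_of_continuous
      (hFc.comp_continuousOn (continuous_snd.continuousOn.prodMk
        (((hsolc x₀ l₀ hl₀).comp continuous_snd.continuousOn fun _ hq => hq.2).prodMk
          continuous_fst.continuousOn)))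
  obtain ⟨δ, hδ, L, hL, hlip⟩ :=
    (isCompact_Icc.image_of_continuousOn (hsolc x₀ l₀ hl₀)).exists_forall_closedBall_norm_sub_le
      (s := Icc 0 T ×ˢ Icc 0 1) (f := fun q z => F q.1 z q.2) fun x =>
        (hFl x).imp fun _ ⟨hδ, L, hL, h⟩ =>
          ⟨hδ, L, hL, fun x₁ h₁ x₂ h₂ q hq => h x₁ h₁ x₂ h₂ q.1 hq.1 q.2 hq.2⟩
  refine IsMildSolution.tendstoUniformlyOn (fun n => hS _ (hls n)) (hS l₀ hl₀) (fun _ => hFcont _)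
    (hFcont l₀) (fun n => hsol _ _ (hls n)) (hsol x₀ l₀ hl₀) hxs
    (fun z => IsContractionSemigroup.tendstoUniformlyOn_apply (fun n => hS _ (hls n))
      (hS l₀ hl₀) z (fun s hs => ((hresc s hs z) l₀ hl₀).tendsto.comp hlt') hT.le)
    ((hFsol.tendstoUniformlyOn hl₀).seq_tendstoUniformlyOn ls hlt')
    ⟨δ, hδ, L, hL, fun n τ hτ z hz => hlip _ (mem_image_of_mem _ hτ) z hz (τ, ls n) ⟨hτ, hls n⟩⟩

theorem stmt12 {E : Type*} [NormedAddCommGroup E] [NormedSpace ℝ E] [CompleteSpace E]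
    [TopologicalSpace.SeparableSpace E]
    (S : ℝ → ℝ → E →L[ℝ] E) (ω : ℝ) (hω : 0 < ω)
    (hsg1 : ∀ l ∈ Set.Icc (0:ℝ) 1, S l 0 = ContinuousLinearMap.id ℝ E)
    (hsg2 : ∀ l ∈ Set.Icc (0:ℝ) 1, ∀ s ≥ (0:ℝ), ∀ t ≥ (0:ℝ),
      S l (s + t) = (S l s).comp (S l t))
    (hsgc : ∀ l ∈ Set.Icc (0:ℝ) 1, ∀ x : E, ContinuousOn (fun t => S l t x) (Set.Ici 0))
    (hnorm : ∀ l ∈ Set.Icc (0:ℝ) 1, ∀ t ≥ (0:ℝ), ‖S l t‖ ≤ Real.exp (-ω * t))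
    (hresc : ∀ t ≥ (0:ℝ), ∀ x : E, ContinuousOn (fun l => S l t x) (Set.Icc 0 1))
    (T : ℝ) (hT : 0 < T)
    (F : ℝ → E → ℝ → E)
    (hFc : Continuous fun p : ℝ × E × ℝ => F p.1 p.2.1 p.2.2)
    (hFl : ∀ x : E, ∃ δ > (0:ℝ), ∃ L > (0:ℝ), ∀ x₁ ∈ Metric.ball x δ,
      ∀ x₂ ∈ Metric.ball x δ, ∀ t ∈ Set.Icc (0:ℝ) T, ∀ l ∈ Set.Icc (0:ℝ) 1,
        ‖F t x₁ l - F t x₂ l‖ ≤ L * ‖x₁ - x₂‖)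
    (c : ℝ) (hc : 0 < c)
    (hFg : ∀ t ∈ Set.Icc (0:ℝ) T, ∀ x : E, ∀ l ∈ Set.Icc (0:ℝ) 1,
      ‖F t x l‖ ≤ c * (1 + ‖x‖))
    (k : ℝ) (hk0 : 0 ≤ k) (hkω : k < ω)
    (hFk : ∀ Ω : Set E, IsBounded Ω →
      hmnc {y : E | ∃ t ∈ Set.Icc (0:ℝ) T, ∃ x ∈ Ω, ∃ l ∈ Set.Icc (0:ℝ) 1, y = F t x l}
        ≤ k * hmnc Ω)
    (sol : E → ℝ → ℝ → E)
    (hsolc : ∀ x : E, ∀ l ∈ Set.Icc (0:ℝ) 1, ContinuousOn (sol x l) (Set.Icc 0 T))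
    (hmild : ∀ x : E, ∀ l ∈ Set.Icc (0:ℝ) 1, ∀ t ∈ Set.Icc (0:ℝ) T,
      sol x l t = S l t x + ∫ τ in (0:ℝ)..t, S l (t - τ) (F τ (sol x l τ) l)) :
    ∀ (xs : ℕ → E) (ls : ℕ → ℝ) (x₀ : E) (l₀ : ℝ), (∀ n, ls n ∈ Set.Icc (0:ℝ) 1) →
      l₀ ∈ Set.Icc (0:ℝ) 1 →
      Filter.Tendsto xs Filter.atTop (nhds x₀) →
      Filter.Tendsto ls Filter.atTop (nhds l₀) →
      TendstoUniformlyOn (fun n t => sol (xs n) (ls n) t) (sol x₀ l₀)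
        Filter.atTop (Set.Icc 0 T) :=
  stmt12_general S ω hω hsg1 hsg2 hsgc hnorm hresc T hT F hFc hFl sol hsolc hmild
end

section
/- Suppose -A generates a C₀ semigroup with ‖S_A(t)‖ ≤ e^{-ωt} (ω > 0) and F : [0,T] × E → E is uniformly bounded: ‖F(t,x)‖ ≤ K. If u is a T-periodic mild solution of u' = -λAu + λF(t,u) for some λ ∈ (0,1), then ‖u(0)‖ < R for any R > K/ω. Equivalently, any periodic point x̄ ∈ ∂B(0,R) with R > K/ω leads to the contradiction R ≤ R e^{-λωT}(1 + (K/(Rω))(e^{λωT} - 1)) < R. -/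
open Set

theorem stmt16 {E : Type*} [NormedAddCommGroup E] [NormedSpace ℝ E] [CompleteSpace E]
    (S : ℝ → E →L[ℝ] E) (ω : ℝ) (hω : 0 < ω)
    (hS0 : S 0 = ContinuousLinearMap.id ℝ E)
    (hSadd : ∀ s ≥ (0:ℝ), ∀ t ≥ (0:ℝ), S (s + t) = (S s).comp (S t))
    (hSnorm : ∀ t ≥ (0:ℝ), ‖S t‖ ≤ Real.exp (-ω * t))
    (T K : ℝ) (hT : 0 < T) (hK : 0 < K)
    (F : ℝ → E → E) (hFc : Continuous fun p : ℝ × E => F p.1 p.2)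
    (hFb : ∀ t : ℝ, ∀ x : E, ‖F t x‖ ≤ K)
    (l : ℝ) (hl : l ∈ Set.Ioo (0:ℝ) 1)
    (u : ℝ → E) (hu : ContinuousOn u (Set.Icc 0 T))
    (hmild : ∀ t ∈ Set.Icc (0:ℝ) T,
      u t = S (l * t) (u 0) + l • ∫ τ in (0:ℝ)..t, S (l * (t - τ)) (F τ (u τ)))
    (hper : u T = u 0) :
    ∀ R : ℝ, K / ω < R → ‖u 0‖ < R := by
  intro R hR
  obtain ⟨hl0, hl1⟩ := hl
  set c : ℝ := ω * l with hc
  have hcpos : 0 < c := mul_pos hω hl0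
  have hmT := hmild T ⟨hT.le, le_refl T⟩
  rw [hper] at hmT
  set f : ℝ → E := fun τ => S (l * (T - τ)) (F τ (u τ)) with hf
  have hS_T : ‖S (l * T)‖ ≤ Real.exp (-c * T) := by
    have := hSnorm (l * T) (mul_nonneg hl0.le hT.le)
    convert this using 2
    ring
  have heT : Real.exp (-c * T) < 1 := by
    rw [Real.exp_lt_one_iff]
    nlinarith
  have hKω : K / ω < R := hR
  by_cases hint : IntervalIntegrable f MeasureTheory.volume 0 T
  · have hfb : ∀ τ ∈ Set.Icc (0:ℝ) T, ‖f τ‖ ≤ Real.exp (-c * (T - τ)) * K := by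
      intro τ hτ
      have h1 : ‖S (l * (T - τ))‖ ≤ Real.exp (-ω * (l * (T - τ))) :=
        hSnorm _ (mul_nonneg hl0.le (sub_nonneg.2 hτ.2))
      calc ‖f τ‖ ≤ ‖S (l * (T - τ))‖ * ‖F τ (u τ)‖ := (S _).le_opNorm _
        _ ≤ Real.exp (-ω * (l * (T - τ))) * K :=
          mul_le_mul h1 (hFb τ (u τ)) (norm_nonneg _) (Real.exp_nonneg _)
        _ = Real.exp (-c * (T - τ)) * K := by
          congr 1
          congr 1
          ring
    have hgc : Continuous fun τ : ℝ => Real.exp (-c * (T - τ)) * K :=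
      (Real.continuous_exp.comp (continuous_const.mul (continuous_const.sub continuous_id))).mul
        continuous_const
    have hgint : IntervalIntegrable (fun τ : ℝ => Real.exp (-c * (T - τ)) * K)
        MeasureTheory.volume 0 T := hgc.intervalIntegrable 0 T
    have hval : ∫ τ in (0:ℝ)..T, Real.exp (-c * (T - τ)) * K
        = K * (1 - Real.exp (-c * T)) / c := by
      have hder : ∀ τ ∈ Set.uIcc (0:ℝ) T,
          HasDerivAt (fun x => Real.exp (-c * (T - x)) / c * K)
            (Real.exp (-c * (T - τ)) * K) τ := by
        intro τ _
        have h1 : HasDerivAt (fun x : ℝ => -c * (T - x)) c τ := by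
          have := ((hasDerivAt_id τ).const_sub T).const_mul (-c)
          exact this.congr_deriv (by ring)
        have h2 := (h1.exp.div_const c).mul_const K
        exact h2.congr_deriv (by field_simp [hcpos.ne'])
      rw [intervalIntegral.integral_eq_sub_of_hasDerivAt hder hgint]
      simp
      field_simp
    have hI : ‖∫ τ in (0:ℝ)..T, f τ‖ ≤ K * (1 - Real.exp (-c * T)) / c := by
      calc ‖∫ τ in (0:ℝ)..T, f τ‖ ≤ ∫ τ in (0:ℝ)..T, ‖f τ‖ :=
            intervalIntegral.norm_integral_le_integral_norm hT.le
        _ ≤ ∫ τ in (0:ℝ)..T, Real.exp (-c * (T - τ)) * K :=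
            intervalIntegral.integral_mono_on hT.le hint.norm hgint hfb
        _ = _ := hval
    have hmain : ‖u 0‖ ≤ Real.exp (-c * T) * ‖u 0‖ + l * (K * (1 - Real.exp (-c * T)) / c) := by
      calc ‖u 0‖ = ‖S (l * T) (u 0) + l • ∫ τ in (0:ℝ)..T, f τ‖ := by rw [← hmT]
        _ ≤ ‖S (l * T) (u 0)‖ + ‖l • ∫ τ in (0:ℝ)..T, f τ‖ := norm_add_le _ _
        _ ≤ Real.exp (-c * T) * ‖u 0‖ + l * (K * (1 - Real.exp (-c * T)) / c) := by
            gcongr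
            · calc ‖S (l * T) (u 0)‖ ≤ ‖S (l * T)‖ * ‖u 0‖ := (S _).le_opNorm _
                _ ≤ Real.exp (-c * T) * ‖u 0‖ :=
                  mul_le_mul_of_nonneg_right hS_T (norm_nonneg _)
            · rw [norm_smul, Real.norm_eq_abs, abs_of_pos hl0]
              gcongr
    have hsimp : l * (K * (1 - Real.exp (-c * T)) / c) = K / ω * (1 - Real.exp (-c * T)) := by
      rw [hc]; field_simp
    rw [hsimp] at hmain
    have h1e : 0 < 1 - Real.exp (-c * T) := by linarith
    nlinarith [norm_nonneg (u 0)]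
  · have hz : (∫ τ in (0:ℝ)..T, f τ) = 0 := intervalIntegral.integral_undef hint
    rw [hz, smul_zero, add_zero] at hmT
    have : ‖u 0‖ ≤ Real.exp (-c * T) * ‖u 0‖ := by
      calc ‖u 0‖ = ‖S (l * T) (u 0)‖ := by rw [← hmT]
        _ ≤ ‖S (l * T)‖ * ‖u 0‖ := (S _).le_opNorm _
        _ ≤ Real.exp (-c * T) * ‖u 0‖ := by gcongr
    have h0 : ‖u 0‖ ≤ 0 := by nlinarith [norm_nonneg (u 0)]
    have : (0:ℝ) < R := lt_of_le_of_lt (by positivity) hR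
    nlinarith [norm_nonneg (u 0)]
end
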